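/- Let π(A) = ∏_{B : B is not a refinement of A} (A − A·B), a product in the partition algebra over all partitions B not finer than or equal to A (where for A equal to the trivial partition, π(A) = A). Then for every partition B not finer than or equal to A, B·π(A) = 0. -/

import Mathlib

/- The partition algebra: the free ℚ-algebra on the commutative monoid of
partitions of `{1,…,n}` (setoids on `Fin n`) under join, with unit the
discrete partition `⊥`. -/

def PartM (n : ℕ) := Setoid (Fin n)

instance (n : ℕ) : CommMonoid (PartM n) where
  mul a b := ((a : Setoid (Fin n)) ⊔ (b : Setoid (Fin n)) : Setoid (Fin n))
  one := (⊥ : Setoid (Fin n))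
  mul_assoc a b c := sup_assoc (α := Setoid (Fin n)) a b c
  one_mul a := bot_sup_eq (α := Setoid (Fin n)) a
  mul_one a := sup_bot_eq (α := Setoid (Fin n)) a
  mul_comm a b := sup_comm (α := Setoid (Fin n)) a b

/-- The basis element of the partition algebra corresponding to a partition. -/
noncomputable def partBasis (n : ℕ) (A : Setoid (Fin n)) : MonoidAlgebra ℚ (PartM n) :=
  MonoidAlgebra.of ℚ (PartM n) A

/- `π(A) = ∏_{B : ¬ B ≤ A} (A − A·B)`, with `π` of the trivial partition `⊤`
set to be `⊤` itself. -/

open scoped Classical in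
noncomputable def piOp (n : ℕ) (A : Setoid (Fin n)) : MonoidAlgebra ℚ (PartM n) :=
  if A = ⊤ then partBasis n A
  else ∏ᶠ (B : Setoid (Fin n)) (_ : ¬ B ≤ A), (partBasis n A - partBasis n (A ⊔ B))

instance Setoid.finite (α : Type*) [Finite α] : Finite (Setoid α) :=
  Finite.of_injective (⇑) fun _ _ h => Setoid.eq_iff_rel_eq.mpr h

theorem dvd_finprod_cond {α M : Type*} [CommMonoid M] [Finite α] {p : α → Prop} (f : α → M)
    {a : α} (ha : p a) : f a ∣ ∏ᶠ (i) (_ : p i), f i := by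
  classical
  have hfa : f a = ∏ᶠ (_ : p a), f a := by rw [finprod_eq_if, if_pos ha]
  exact hfa ▸ finprod_mem_dvd (f := fun i => ∏ᶠ (_ : p i), f i) a (Set.toFinite _)

lemma partBasis_mul (n : ℕ) (A B : Setoid (Fin n)) :
    partBasis n A * partBasis n B = partBasis n (A ⊔ B) :=
  (map_mul (M := PartM n) (MonoidAlgebra.of ℚ (PartM n)) A B).symm

lemma partBasis_mul_sub_partBasis_sup (n : ℕ) (A B : Setoid (Fin n)) :
    partBasis n B * (partBasis n A - partBasis n (A ⊔ B)) = 0 := by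
  rw [mul_sub, partBasis_mul, partBasis_mul, sup_comm A B, ← sup_assoc, sup_idem, sub_self]

theorem mul_piOp_eq_zero {n : ℕ} (A B : Setoid (Fin n)) (h : ¬ B ≤ A) :
    partBasis n B * piOp n A = 0 := by
  have hA : A ≠ ⊤ := fun hA => h (hA ▸ le_top)
  rw [piOp, if_neg hA, ← zero_dvd_iff, ← partBasis_mul_sub_partBasis_sup n A B]
  exact mul_dvd_mul_left _ (dvd_finprod_cond (fun B => partBasis n A - partBasis n (A ⊔ B)) h)
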